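/- The deletion N − {0,1,2,3,4,5} of the rank-4 matroid N is isomorphic to the non-Fano matroid F_7^-. -/

import Mathlib

/-! Inside `{6,…,12}` the rank-3 flat `{6,…,12}` of `N` forbids independent sets of size 4, so
the independent sets of the deletion are the sets of size at most 3 containing no 3-point line
of `N`; the 3-point lines of `N` lying in `{6,…,12}` are exactly the images under `emb` of the
six lines of `F₇⁻`. -/

def mLines : Set (Set (Fin 13)) :=
  {{0,3,9}, {0,4,7}, {0,5,6}, {8,9,10}, {7,10,11},
   {1,4,9}, {1,3,7}, {1,5,8}, {6,9,11}, {6,10,12},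
   {2,5,9}, {2,3,6}, {2,4,8}, {7,9,12}, {8,11,12}}

def bigBlocks : Set (Set (Fin 13)) :=
  {{0,1,3,4,7,9,12}, {0,2,3,5,6,9,11}, {1,2,4,5,8,9,10}, {6,7,8,9,10,11,12},
   {0,3,8,9,10}, {1,4,6,9,11}, {2,5,7,9,12},
   {0,4,5,6,7}, {1,2,3,6,7}, {0,1,5,6,8}, {2,3,4,6,8}, {0,2,4,7,8}, {1,3,5,7,8},
   {0,4,7,10,11}, {1,3,7,10,11}, {0,5,6,10,12}, {2,3,6,10,12}, {1,5,8,11,12},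
   {2,4,8,11,12}, {0,8,11,12}, {1,6,10,12}, {2,7,10,11}, {3,8,11,12},
   {4,6,10,12}, {5,7,10,11}}

def IsN (N : Matroid (Fin 13)) : Prop :=
  N.E = Set.univ ∧ ∀ I : Set (Fin 13),
    N.Indep I ↔ I.encard ≤ 4 ∧ (∀ L ∈ mLines, ¬ L ⊆ I) ∧
      ¬ ∃ Z ∈ bigBlocks, I ⊆ Z ∧ I.encard = 4

def nonFanoLines : Set (Set (Fin 7)) :=
  {{0,1,5}, {0,2,4}, {0,3,6}, {1,2,3}, {1,4,6}, {2,5,6}}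

/-- An identification of `{0,…,6}` with `{6,…,12} ⊆ {0,…,12}`. -/
def emb : Fin 7 → Fin 13 := ![9, 10, 11, 7, 6, 8, 12]

lemma emb_injective : Function.Injective emb := by decide

lemma range_emb : Set.range emb = Set.univ \ {0,1,2,3,4,5} := by
  simp only [Set.ext_iff]; decide

lemma Set.forall_not_subset_iff_notMem {α : Type*} {𝓛 : Set (Set α)} {k : ℕ}
    (h𝓛 : ∀ L ∈ 𝓛, L.encard = k) {I : Set α} (hI : I.encard ≤ k) :
    (∀ L ∈ 𝓛, ¬ L ⊆ I) ↔ I ∉ 𝓛 := by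
  refine ⟨fun h hI𝓛 => h I hI𝓛 subset_rfl, fun hI𝓛 L hL hLI => hI𝓛 ?_⟩
  rwa [← (Set.finite_of_encard_le_coe hI).eq_of_subset_of_encard_le' hLI
    (hI.trans_eq (h𝓛 L hL).symm)]

lemma encard_of_mem_nonFanoLines {L : Set (Fin 7)} (hL : L ∈ nonFanoLines) :
    L.encard = 3 := by
  rcases hL with rfl | rfl | rfl | rfl | rfl | rfl <;>
    exact Set.encard_eq_three.2 ⟨_, _, _, by decide, by decide, by decide, rfl⟩

set_option synthInstance.maxSize 1024 in
lemma image_emb_mem_mLines {L : Set (Fin 7)} (hL : L ∈ nonFanoLines) : emb '' L ∈ mLines := by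
  rcases hL with rfl | rfl | rfl | rfl | rfl | rfl <;>
    simp only [Set.image_insert_eq, Set.image_singleton, mLines, Set.mem_insert_iff,
      Set.mem_singleton_iff, Set.ext_iff] <;> decide

lemma mem_image_nonFanoLines_of_subset_range {L : Set (Fin 13)} (hL : L ∈ mLines)
    (hLE : L ⊆ Set.range emb) : L ∈ Set.image emb '' nonFanoLines := by
  rw [range_emb] at hLE
  revert hLE
  rcases hL with
    rfl | rfl | rfl | rfl | rfl | rfl | rfl | rfl | rfl | rfl | rfl | rfl | rfl | rfl | rfl <;>
    simp only [Set.image_insert_eq, Set.image_singleton, nonFanoLines, Set.mem_insert_iff,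
      Set.mem_singleton_iff, Set.subset_def, Set.ext_iff, Set.mem_sdiff, Set.mem_univ, true_and] <;>
    decide

lemma forall_mLines_not_subset_image_iff (I : Set (Fin 7)) :
    (∀ L ∈ mLines, ¬ L ⊆ emb '' I) ↔ ∀ L ∈ nonFanoLines, ¬ L ⊆ I := by
  refine ⟨fun h L hL hLI => h _ (image_emb_mem_mLines hL) (Set.image_mono hLI),
    fun h L hL hLI => ?_⟩
  obtain ⟨L', hL', rfl⟩ :=
    mem_image_nonFanoLines_of_subset_range hL (hLI.trans (Set.image_subset_range _ _))
  exact h L' hL' ((Set.image_subset_image_iff emb_injective).1 hLI)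

lemma encard_image_emb_le_three_iff (I : Set (Fin 7)) :
    ((emb '' I).encard ≤ 4 ∧ ¬ ∃ Z ∈ bigBlocks, emb '' I ⊆ Z ∧ (emb '' I).encard = 4) ↔
      I.encard ≤ 3 := by
  rw [emb_injective.encard_image]
  refine ⟨fun ⟨h4, hZ⟩ => ?_, fun h3 => ⟨h3.trans (by norm_num), ?_⟩⟩
  · have hblock : ({6,7,8,9,10,11,12} : Set (Fin 13)) ∈ bigBlocks := by simp [bigBlocks]
    have hsub : emb '' I ⊆ {6,7,8,9,10,11,12} :=
      (Set.image_subset_range emb I).trans (by rw [range_emb]; intro x; revert x; decide)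
    exact (ENat.lt_add_one_iff (by decide)).1
      (h4.lt_of_ne fun h => hZ ⟨_, hblock, hsub, h⟩)
  · rintro ⟨-, -, -, h4⟩
    exact absurd (h4 ▸ h3) (by decide)

/-- The deletion `N − {0,1,2,3,4,5}` (i.e. the restriction of `N` to `{6,…,12}`)
is isomorphic to the non-Fano matroid `F₇⁻`, via the bijection `emb`. -/
theorem deletion_isNonFano (N : Matroid (Fin 13)) (hN : IsN N) :
    Function.Injective emb ∧
    Set.range emb = N.E \ {0,1,2,3,4,5} ∧
    ∀ I : Set (Fin 7),
      (N.restrict (N.E \ {0,1,2,3,4,5})).Indep (emb '' I) ↔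
        I.encard ≤ 3 ∧ I ∉ nonFanoLines := by
  obtain ⟨hE, hIndep⟩ := hN
  refine ⟨emb_injective, hE ▸ range_emb, fun I => ?_⟩
  rw [Matroid.restrict_indep_iff, hIndep, hE, ← range_emb,
    and_iff_left (Set.image_subset_range emb I), forall_mLines_not_subset_image_iff]
  have hlines (h3 : I.encard ≤ 3) :=
    Set.forall_not_subset_iff_notMem (fun _ => encard_of_mem_nonFanoLines) h3
  constructor
  · rintro ⟨h4, hL, hZ⟩
    have h3 := (encard_image_emb_le_three_iff I).1 ⟨h4, hZ⟩
    exact ⟨h3, (hlines h3).1 hL⟩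
  · rintro ⟨h3, hI⟩
    obtain ⟨h4, hZ⟩ := (encard_image_emb_le_three_iff I).2 h3
    exact ⟨h4, (hlines h3).2 hI, hZ⟩
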